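/- arXiv:0704.3058 — 2 statements merged into one kernel-verified Lean document; each statement's English description precedes it below -/
import Mathlib

section
/- Let m ≤ n be positive integers and k a positive integer. Let X_1, …, X_k be pairwise disjoint subsets of [m] = {1, …, m} and Y_1, …, Y_k pairwise disjoint subsets of [n] = {1, …, n} with |X_i| = |Y_i| for all i = 1, …, k. Then the number of injective functions f : [m] → [n] such that the image set f(X_i) is not equal to Y_i for every i = 1, …, k equals ∑_{I ⊆ [k]} (−1)^{|I|} · (n − |⋃_{i∈I} X_i|)^{(m − |⋃_{i∈I} X_i|)} · ∏_{i∈I} |X_i|!, where the sum runs over all subsets I of {1, …, k}. -/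
/-
Inclusion–exclusion over the events `f(X i) = Y i` reduces the count to the number of injections
with `f(X i) = Y i` for all `i ∈ I`. For an injection this says exactly that `f` carries the label
`x ↦ {i ∈ I | x ∈ X i}` on `[m]` to the corresponding label on `[n]`; label-preserving injections
split into injections between fibres, here bijections `X i ≃ Y i` and an injection of the
complement of `⋃ X i` into the complement of `⋃ Y i`.
-/

open Finset

theorem card_filter_and_forall_not_eq_sum_powerset {ι α : Type*} [Fintype α] [DecidableEq α]
    (p : α → Prop) [DecidablePred p] (q : ι → α → Prop) [∀ i, DecidablePred (q i)]
    (s : Finset ι) :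
    (#{a | p a ∧ ∀ i ∈ s, ¬q i a} : ℤ) =
      ∑ t ∈ s.powerset, (-1 : ℤ) ^ #t * #{a | p a ∧ ∀ i ∈ t, q i a} := by
  have hinf : ∀ (t : Finset ι) (S : ι → Finset α) (r : ι → α → Prop) [∀ i, DecidablePred (r i)],
      (∀ i a, a ∈ S i ↔ r i a) →
      (∑ a ∈ t.inf S, if p a then 1 else 0 : ℤ) = #{a | p a ∧ ∀ i ∈ t, r i a} := by
    intro t S r _ hS
    rw [sum_boole]
    congr 2
    ext a
    simp [mem_inf, hS, and_comm]
  rw [← hinf s (fun i => ({a | q i a} : Finset α)ᶜ) _ fun i a => by simp,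
    inclusion_exclusion_sum_inf_compl]
  exact sum_congr rfl fun t _ => by
    rw [smul_eq_mul, hinf t _ (fun i a => q i a) fun _ a => mem_filter_univ a]

section LabelPreserving

variable {α β κ : Type*} (a : α → κ) (b : β → κ)

lemma coe_apply_fibre_eq (g : Π c, ({x // a x = c} ↪ {y // b y = c})) {c : κ} {x : α}
    (hx : a x = c) : (g c ⟨x, hx⟩ : β) = g (a x) ⟨x, rfl⟩ := by
  subst hx
  rfl

def injectiveLabelPreservingEquivPiEmbedding :
    {f : α → β // Function.Injective f ∧ ∀ x, b (f x) = a x} ≃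
      Π c, ({x // a x = c} ↪ {y // b y = c}) where
  toFun f c := ⟨fun x => ⟨f.1 x, (f.2.2 x).trans x.2⟩,
    fun _ _ h => Subtype.ext (f.2.1 (congrArg Subtype.val h))⟩
  invFun g := by
    refine ⟨fun x => g (a x) ⟨x, rfl⟩, fun x y h => ?_, fun x => (g (a x) ⟨x, rfl⟩).2⟩
    have hxy : a y = a x := by
      rw [← (g (a x) ⟨x, rfl⟩).2, ← (g (a y) ⟨y, rfl⟩).2]
      exact congrArg b h.symm
    dsimp only at h
    rw [← coe_apply_fibre_eq a b g hxy] at h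
    exact congrArg Subtype.val ((g (a x)).injective (Subtype.ext h))
  left_inv _ := rfl
  right_inv g := by
    funext c
    ext ⟨x, hx⟩
    exact (coe_apply_fibre_eq a b g hx).symm

theorem card_filter_injective_label_preserving [Fintype α] [Fintype β] [Fintype κ]
    [DecidableEq α] [DecidableEq β] [DecidableEq κ] :
    #{f : α → β | Function.Injective f ∧ ∀ x, b (f x) = a x} =
      ∏ c, (#{y | b y = c}).descFactorial #{x | a x = c} := by
  rw [← Fintype.card_subtype, Fintype.card_congr (injectiveLabelPreservingEquivPiEmbedding a b),
    Fintype.card_pi]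
  simp only [Fintype.card_embedding_eq, Fintype.card_subtype]

end LabelPreserving

section Blocks

variable {ι α : Type*} [DecidableEq α] {I : Finset ι} {X : ι → Finset α}

def blocksContaining (I : Finset ι) (X : ι → Finset α) (x : α) : Finset ι :=
  {i ∈ I | x ∈ X i}

lemma mem_blocksContaining {x : α} {i : ι} :
    i ∈ blocksContaining I X x ↔ i ∈ I ∧ x ∈ X i :=
  mem_filter

lemma blocksContaining_eq_empty_iff {x : α} :
    blocksContaining I X x = ∅ ↔ x ∉ I.biUnion X := by
  simp [eq_empty_iff_forall_notMem, mem_blocksContaining]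

lemma blocksContaining_eq_singleton_iff (hX : (I : Set ι).PairwiseDisjoint X) {i : ι}
    (hi : i ∈ I) {x : α} : blocksContaining I X x = {i} ↔ x ∈ X i := by
  refine ⟨fun h => (mem_blocksContaining.1 (h ▸ mem_singleton_self i)).2, fun hx => ?_⟩
  ext j
  rw [mem_blocksContaining, mem_singleton]
  refine ⟨fun ⟨hj, hxj⟩ => ?_, fun hji => hji ▸ ⟨hi, hx⟩⟩
  by_contra hji
  exact disjoint_left.1 (hX hj hi hji) hxj hx

lemma blocksContaining_eq_empty_or_singleton (hX : (I : Set ι).PairwiseDisjoint X) (x : α) :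
    blocksContaining I X x = ∅ ∨ ∃ i ∈ I, blocksContaining I X x = {i} := by
  rcases (blocksContaining I X x).eq_empty_or_nonempty with h | ⟨i, hi⟩
  · exact .inl h
  · obtain ⟨hiI, hxi⟩ := mem_blocksContaining.1 hi
    exact .inr ⟨i, hiI, (blocksContaining_eq_singleton_iff hX hiI).2 hxi⟩

variable [Fintype α] [DecidableEq ι]

lemma filter_blocksContaining_eq_empty :
    ({x | blocksContaining I X x = ∅} : Finset α) = (I.biUnion X)ᶜ := by
  ext x
  simp [blocksContaining_eq_empty_iff]

lemma filter_blocksContaining_eq_singleton (hX : (I : Set ι).PairwiseDisjoint X) {i : ι}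
    (hi : i ∈ I) : ({x | blocksContaining I X x = {i}} : Finset α) = X i := by
  ext x
  simp [blocksContaining_eq_singleton_iff hX hi]

lemma filter_blocksContaining_eq_of_notMem (hX : (I : Set ι).PairwiseDisjoint X) {c : Finset ι}
    (hc : c ∉ insert ∅ (I.map ⟨singleton, singleton_injective⟩)) :
    ({x | blocksContaining I X x = c} : Finset α) = ∅ := by
  refine filter_eq_empty_iff.2 fun x _ hxc => hc ?_
  rcases blocksContaining_eq_empty_or_singleton hX x with h | ⟨i, hi, h⟩
  · exact hxc ▸ h ▸ mem_insert_self _ _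
  · exact mem_insert_of_mem (mem_map.2 ⟨i, hi, h.symm.trans hxc⟩)

end Blocks

section Counting

variable {ι α β : Type*} [DecidableEq α] [DecidableEq β]

lemma card_biUnion_eq_of_card_eq {I : Finset ι} {X : ι → Finset α} {Y : ι → Finset β}
    (hX : (I : Set ι).PairwiseDisjoint X) (hY : (I : Set ι).PairwiseDisjoint Y)
    (hcard : ∀ i ∈ I, #(X i) = #(Y i)) : #(I.biUnion Y) = #(I.biUnion X) := by
  rw [card_biUnion hX, card_biUnion hY]
  exact (sum_congr rfl hcard).symm

lemma prod_descFactorial_card_fibres_blocksContaining [DecidableEq ι] [Fintype ι] [Fintype α]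
    [Fintype β] {I : Finset ι} {X : ι → Finset α} {Y : ι → Finset β}
    (hX : (I : Set ι).PairwiseDisjoint X) (hY : (I : Set ι).PairwiseDisjoint Y)
    (hcard : ∀ i ∈ I, #(X i) = #(Y i)) :
    ∏ c, (#{y | blocksContaining I Y y = c}).descFactorial #{x | blocksContaining I X x = c} =
      (Fintype.card β - #(I.biUnion X)).descFactorial (Fintype.card α - #(I.biUnion X)) *
        ∏ i ∈ I, (#(X i)).factorial := by
  have hsupp : ∅ ∉ I.map ⟨singleton, singleton_injective⟩ := by simp
  rw [← prod_subset (subset_univ (insert ∅ (I.map ⟨singleton, singleton_injective⟩)))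
      fun c _ hc => by rw [filter_blocksContaining_eq_of_notMem hX hc, card_empty,
        Nat.descFactorial_zero],
    prod_insert hsupp, prod_map, filter_blocksContaining_eq_empty,
    filter_blocksContaining_eq_empty, card_compl, card_compl,
    card_biUnion_eq_of_card_eq hX hY hcard]
  congr 1
  refine prod_congr rfl fun i hi => ?_
  simp only [Function.Embedding.coeFn_mk, filter_blocksContaining_eq_singleton hX hi,
    filter_blocksContaining_eq_singleton hY hi, hcard i hi, Nat.descFactorial_self]

omit [DecidableEq α] in
lemma image_eq_iff_forall_mem_iff {f : α → β} (hf : Function.Injective f) {s : Finset α}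
    {t : Finset β} (hst : #s = #t) : s.image f = t ↔ ∀ x, f x ∈ t ↔ x ∈ s := by
  refine ⟨fun h x => by rw [← h, hf.mem_finset_image], fun h => ?_⟩
  refine eq_of_subset_of_card_le (fun y hy => ?_) (by rw [card_image_of_injective s hf, hst])
  obtain ⟨x, hx, rfl⟩ := mem_image.1 hy
  exact (h x).2 hx

lemma forall_image_eq_iff_blocksContaining {I : Finset ι} {X : ι → Finset α} {Y : ι → Finset β}
    (hcard : ∀ i ∈ I, #(X i) = #(Y i)) {f : α → β} (hf : Function.Injective f) :
    (∀ i ∈ I, (X i).image f = Y i) ↔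
      ∀ x, blocksContaining I Y (f x) = blocksContaining I X x := by
  rw [forall₂_congr fun i hi => image_eq_iff_forall_mem_iff hf (hcard i hi)]
  simp only [Finset.ext_iff, mem_blocksContaining]
  exact ⟨fun h x i => and_congr_right (h i · x), fun h i hi x => by simpa [hi] using h x i⟩

theorem card_injective_forall_image_eq [DecidableEq ι] [Fintype ι] [Fintype α] [Fintype β]
    (I : Finset ι) {X : ι → Finset α} {Y : ι → Finset β}
    (hX : (I : Set ι).PairwiseDisjoint X) (hY : (I : Set ι).PairwiseDisjoint Y)
    (hcard : ∀ i ∈ I, #(X i) = #(Y i)) :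
    #{f : α → β | Function.Injective f ∧ ∀ i ∈ I, (X i).image f = Y i} =
      (Fintype.card β - #(I.biUnion X)).descFactorial (Fintype.card α - #(I.biUnion X)) *
        ∏ i ∈ I, (#(X i)).factorial := by
  rw [← prod_descFactorial_card_fibres_blocksContaining hX hY hcard,
    ← card_filter_injective_label_preserving]
  congr 1
  exact filter_congr fun f _ =>
    and_congr_right fun hf => forall_image_eq_iff_blocksContaining hcard hf

end Counting

theorem stmt_7_general (m n k : ℕ)
    (X : Fin k → Finset (Fin m)) (Y : Fin k → Finset (Fin n))
    (hX : ∀ i j, i ≠ j → Disjoint (X i) (X j))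
    (hY : ∀ i j, i ≠ j → Disjoint (Y i) (Y j))
    (hcard : ∀ i, (X i).card = (Y i).card) :
    ((Finset.univ.filter
        (fun f : Fin m → Fin n =>
          Function.Injective f ∧ ∀ i, (X i).image f ≠ Y i)).card : ℤ) =
      ∑ I : Finset (Fin k),
        (-1) ^ I.card *
          ((n - (I.biUnion X).card).descFactorial (m - (I.biUnion X).card) : ℤ) *
          ∏ i ∈ I, (Nat.factorial (X i).card : ℤ) := by
  have inclusion_exclusion := card_filter_and_forall_not_eq_sum_powerset
    (fun f : Fin m → Fin n => Function.Injective f) (fun i f => (X i).image f = Y i) univ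
  simp only [mem_univ, forall_const, powerset_univ] at inclusion_exclusion
  rw [inclusion_exclusion]
  refine sum_congr rfl fun I _ => ?_
  have hcount := card_injective_forall_image_eq I (fun i _ j _ => hX i j)
    (fun i _ j _ => hY i j) fun i _ => hcard i
  rw [Fintype.card_fin, Fintype.card_fin] at hcount
  -- The two filters decide `∀ i ∈ I, _` through different instances; `congr` identifies them.
  rw [mul_assoc, ← Nat.cast_prod, ← Nat.cast_mul, ← hcount]
  congr

/-- **Theorem 3.** Let `X 1, …, X k` be pairwise disjoint blocks in `[m]` and
`Y 1, …, Y k` pairwise disjoint blocks in `[n]` with `|X i| = |Y i|`. The number of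
injections `f : [m] → [n]` with `f(X i) ≠ Y i` for every `i` equals
`∑_{I ⊆ [k]} (−1)^{|I|} (n − |⋃_{i∈I} X i|)^{(m − |⋃_{i∈I} X i|)} ∏_{i∈I} |X i|!`,
where `a^{(b)}` is the falling factorial. -/
theorem stmt_7 (m n k : ℕ) (hm : 0 < m) (hk : 0 < k) (hmn : m ≤ n)
    (X : Fin k → Finset (Fin m)) (Y : Fin k → Finset (Fin n))
    (hX : ∀ i j, i ≠ j → Disjoint (X i) (X j))
    (hY : ∀ i j, i ≠ j → Disjoint (Y i) (Y j))
    (hcard : ∀ i, (X i).card = (Y i).card) :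
    ((Finset.univ.filter
        (fun f : Fin m → Fin n =>
          Function.Injective f ∧ ∀ i, (X i).image f ≠ Y i)).card : ℤ) =
      ∑ I : Finset (Fin k),
        (-1) ^ I.card *
          ((n - (I.biUnion X).card).descFactorial (m - (I.biUnion X).card) : ℤ) *
          ∏ i ∈ I, (Nat.factorial (X i).card : ℤ) :=
  stmt_7_general m n k X Y hX hY hcard
end

section
/- Let m ≤ n be positive integers and k ≤ m. Let x_1, …, x_k be distinct elements of [m] = {1, …, m} and y_1, …, y_k distinct elements of [n] = {1, …, n}. Then the number I_1(m, n, k) of injective functions f : [m] → [n] such that f(x_i) ≠ y_i for all i = 1, …, k satisfies I_1(m, n, k) = ∑_{i=0}^{k} (−1)^i · C(k, i) · (n−i)^{(m−i)}. -/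
/-!
Inclusion–exclusion over the set `t` of constraints `f (x i) = y i` that are violated. An
injection satisfying all constraints in `t` is the same as an injection from the complement of
`x '' t` into the complement of `y '' t`, so there are `(n - #t)^{(m - #t)}` of them. This
depends only on `#t`, and grouping the subsets of `[k]` by size gives the binomial coefficients.
-/

open Finset

theorem Fintype.card_embedding_extending {ι α β : Type*} [Fintype ι] [Fintype α] [Fintype β]
    (x : ι ↪ α) (y : ι ↪ β) [Fintype {f : α ↪ β // ∀ i, f (x i) = y i}] :
    Fintype.card {f : α ↪ β // ∀ i, f (x i) = y i} =
      (Fintype.card β - Fintype.card ι).descFactorial (Fintype.card α - Fintype.card ι) := by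
  classical
  let e : ι ⊕ ↥(Set.range x)ᶜ ≃ α :=
    ((Equiv.ofInjective x x.injective).sumCongr (Equiv.refl _)).trans (Equiv.sumCompl _)
  let split := (Equiv.embeddingCongr e.symm (Equiv.refl β)).trans
    Equiv.sumEmbeddingEquivSigmaEmbeddingRestricted
  have hsplit : {f : α ↪ β // ∀ i, f (x i) = y i} ≃ (↥(Set.range x)ᶜ ↪ ↥(Set.range y)ᶜ) :=
    (split.subtypeEquiv fun f => ?_).trans (Equiv.sigmaSubtype y)
  · rw [Fintype.card_congr hsplit, Fintype.card_embedding_eq, Fintype.card_compl_set,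
      Fintype.card_compl_set, Set.card_range_of_injective x.injective,
      Set.card_range_of_injective y.injective]
  · -- the first component of `split f` is `fun i => f (x i)` by construction
    rw [Function.Embedding.ext_iff]
    rfl

theorem Fintype.card_embedding_extending_on {ι α β : Type*} [Fintype α] [Fintype β]
    [DecidableEq α] [DecidableEq β] {x : ι → α} {y : ι → β}
    (hx : Function.Injective x) (hy : Function.Injective y) (s : Finset ι) :
    #{f : α ↪ β | ∀ i ∈ s, f (x i) = y i} =
      (Fintype.card β - #s).descFactorial (Fintype.card α - #s) := by
  calc #{f : α ↪ β | ∀ i ∈ s, f (x i) = y i}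
      = Fintype.card {f : α ↪ β // ∀ i : s, f (x i) = y i} := by
        rw [Fintype.card_subtype]
        simp
    _ = _ := Fintype.card_coe s ▸ card_embedding_extending
        ((Function.Embedding.subtype _).trans ⟨x, hx⟩)
        ((Function.Embedding.subtype _).trans ⟨y, hy⟩)

theorem Finset.inclusion_exclusion_card_filter_forall_not {ι α : Type*} [Fintype α]
    (s : Finset ι) (P : ι → α → Prop) [∀ i, DecidablePred (P i)] :
    (#{a | ∀ i ∈ s, ¬ P i a} : ℤ) = ∑ t ∈ s.powerset, (-1 : ℤ) ^ #t * #{a | ∀ i ∈ t, P i a} := by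
  classical
  convert inclusion_exclusion_card_inf_compl s (fun i => {a | P i a}) using 5 <;> ext <;>
    simp [mem_inf]

theorem Finset.card_filter_injective_and {α β : Type*} [Fintype α] [DecidableEq α] [Fintype β]
    [DecidableEq β] (P : (α → β) → Prop) [DecidablePred P] :
    #{f : α → β | Function.Injective f ∧ P f} = #{f : α ↪ β | P f} := by
  refine (card_nbij (⇑) (fun f hf => ?_) (fun f _ g _ h => DFunLike.coe_injective h) ?_).symm
  · simpa using ⟨f.injective, (mem_filter.1 hf).2⟩
  · intro f hf
    obtain ⟨hinj, hP⟩ := (mem_filter.1 hf).2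
    exact ⟨⟨f, hinj⟩, by simpa using hP, rfl⟩

theorem stmt_8_general (m n k : ℕ)
    (x : Fin k → Fin m) (hx : Function.Injective x)
    (y : Fin k → Fin n) (hy : Function.Injective y) :
    ((Finset.univ.filter
        (fun f : Fin m → Fin n =>
          Function.Injective f ∧ ∀ i, f (x i) ≠ y i)).card : ℤ) =
      ∑ i ∈ Finset.range (k + 1),
        (-1) ^ i * (k.choose i) * ((n - i).descFactorial (m - i) : ℤ) := by
  have hIE := inclusion_exclusion_card_filter_forall_not univ
    (fun i (f : Fin m ↪ Fin n) => f (x i) = y i)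
  simp only [mem_univ, true_implies, Fintype.card_embedding_extending_on hx hy,
    Fintype.card_fin] at hIE
  rw [card_filter_injective_and, hIE,
    sum_powerset_apply_card (fun j => (-1 : ℤ) ^ j * ((n - j).descFactorial (m - j) : ℤ)),
    card_univ, Fintype.card_fin]
  refine sum_congr rfl fun i _ => ?_
  rw [nsmul_eq_mul]
  ring

/-- **Corollary 6.** For distinct `x 1, …, x k` in `[m]` and distinct `y 1, …, y k`
in `[n]`, the number of injections `f : [m] → [n]` with `f (x i) ≠ y i` for all `i`
equals `∑_{i=0}^{k} (−1)^i C(k,i) (n−i)^{(m−i)}`, where `a^{(b)}` is the falling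
factorial. -/
theorem stmt_8 (m n k : ℕ) (hm : 0 < m) (hk : 0 < k) (hmn : m ≤ n) (hkm : k ≤ m)
    (x : Fin k → Fin m) (hx : Function.Injective x)
    (y : Fin k → Fin n) (hy : Function.Injective y) :
    ((Finset.univ.filter
        (fun f : Fin m → Fin n =>
          Function.Injective f ∧ ∀ i, f (x i) ≠ y i)).card : ℤ) =
      ∑ i ∈ Finset.range (k + 1),
        (-1) ^ i * (k.choose i) * ((n - i).descFactorial (m - i) : ℤ) :=
  stmt_8_general m n k x hx y hy
end
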